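/- Let f : FP(E) → FP(F) be a vertex-injective, monotone, regular path homomorphism, and let v be a regular vertex of E that is not 0-regular. Then f(v) is a regular vertex of F that is not 0-regular. -/

import Mathlib

/-! Put `w = f(v)` and `S = f(s⁻¹(v))`, an exhaustive prefix-free set of paths starting at `w`.
By exhaustiveness at the first edge, every edge leaving `w` begins one of the finitely many
paths of `S`, and `S` is nonempty, so `w` is regular. If `w` were 0-regular with loop `x`, every
path from `w` would be a power of `x`; any two are comparable, so prefix-freeness leaves a single
path in `S`. Injectivity of `f` on `s⁻¹(v)` then leaves `v` a single edge `e`, and since `f(e)`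
ends at `w = f(v)`, vertex-injectivity makes `e` a loop at `v`. -/

/-- A directed graph. -/
structure DGraph where
  V : Type
  E : Type
  src : E → V
  tgt : E → V

namespace DGraph

/-- Finite paths from `v` to `w` in a graph. -/
inductive Path (G : DGraph) : G.V → G.V → Type
  | nil (v : G.V) : Path G v v
  | cons (e : G.E) {w : G.V} (p : Path G (G.tgt e) w) : Path G (G.src e) w

/-- Concatenation of composable indexed paths. -/
def Path.comp {G : DGraph} : ∀ {a b c : G.V}, G.Path a b → G.Path b c → G.Path a c
  | _, _, _, .nil _, q => q
  | _, _, _, .cons e p, q => .cons e (p.comp q)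

/-- The list of edges of a path. -/
def Path.edges {G : DGraph} : ∀ {a b : G.V}, G.Path a b → List G.E
  | _, _, .nil _ => []
  | _, _, .cons e p => e :: p.edges

/-- The set of all finite paths of a graph (with arbitrary endpoints). -/
def FP (G : DGraph) : Type := Σ (v : G.V) (w : G.V), G.Path v w

/-- The source (beginning) of a finite path. -/
def FP.src {G : DGraph} (p : G.FP) : G.V := p.1

/-- The target (end) of a finite path. -/
def FP.tgt {G : DGraph} (p : G.FP) : G.V := p.2.1

/-- The list of edges of a finite path. -/
def FP.edges {G : DGraph} (p : G.FP) : List G.E := p.2.2.edges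

/-- The length of a finite path. -/
def FP.length {G : DGraph} (p : G.FP) : ℕ := p.edges.length

/-- A vertex, viewed as a length-zero finite path. -/
def FP.ofVertex {G : DGraph} (v : G.V) : G.FP := ⟨v, v, .nil v⟩

/-- An edge, viewed as a length-one finite path. -/
def FP.ofEdge {G : DGraph} (e : G.E) : G.FP :=
  ⟨G.src e, G.tgt e, .cons e (.nil (G.tgt e))⟩

/-- Concatenation of composable finite paths. -/
def FP.comp {G : DGraph} (p q : G.FP) (h : p.tgt = q.src) : G.FP :=
  ⟨p.1, q.2.1, p.2.2.comp (cast (congrArg (fun x => G.Path x q.2.1) h.symm) q.2.2)⟩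

/-- The prefix (extension) relation `α ⪯ β` on finite paths: `β = αγ` for some path `γ`. -/
def FP.le {G : DGraph} (p q : G.FP) : Prop :=
  ∃ (r : G.FP) (h : p.tgt = r.src), q = p.comp r h

/-- A path homomorphism of graphs: a map on finite paths sending vertices to
vertices, intertwining the extended source and target maps, and preserving
concatenation of composable paths. -/
def IsPathHom {G H : DGraph} (f : G.FP → H.FP) : Prop :=
  (∀ v : G.V, ∃ w : H.V, f (FP.ofVertex v) = FP.ofVertex w) ∧
  (∀ p : G.FP, f (FP.ofVertex p.src) = FP.ofVertex (f p).src) ∧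
  (∀ p : G.FP, f (FP.ofVertex p.tgt) = FP.ofVertex (f p).tgt) ∧
  (∀ (p q : G.FP) (h : p.tgt = q.src),
    ∃ h' : (f p).tgt = (f q).src, f (p.comp q h) = (f p).comp (f q) h')

/-- A map on finite paths is vertex-injective if it is injective on vertices. -/
def VertexInjective {G H : DGraph} (f : G.FP → H.FP) : Prop :=
  Function.Injective (fun v : G.V => f (FP.ofVertex v))

/-- The monotonicity condition on edges: `f(e) ⪯ f(e′)` implies `e = e′`. -/
def EdgeMonotone {G H : DGraph} (f : G.FP → H.FP) : Prop :=
  ∀ e e' : G.E, FP.le (f (FP.ofEdge e)) (f (FP.ofEdge e')) → e = e'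

end DGraph

namespace DGraph

/-- A vertex is regular if it emits at least one and only finitely many edges. -/
def RegularV (G : DGraph) (v : G.V) : Prop :=
  {e : G.E | G.src e = v}.Finite ∧ {e : G.E | G.src e = v}.Nonempty

/-- A vertex is 0-regular if it emits exactly one edge and that edge is a loop
at the vertex. -/
def Reg0V (G : DGraph) (v : G.V) : Prop :=
  ∃ e : G.E, {x : G.E | G.src x = v} = {e} ∧ G.tgt e = v

/-- The image `f(s⁻¹(v))` of the set of edges emitted from `v`. -/
def EdgeImg {G H : DGraph} (f : G.FP → H.FP) (v : G.V) : Set H.FP :=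
  (fun e => f (FP.ofEdge e)) '' {e : G.E | G.src e = v}

/-- The regularity condition at a vertex `v`: `f` is injective on `s⁻¹(v)`, and
`p ∈ f(s⁻¹(v))` if and only if (i) `p` is a path of positive length, (ii) any
extension `pq ∈ f(s⁻¹(v))` has `q` trivial, and (iii) for every `i` and every
edge `x` with the same source as the `i`-th edge of `p`, some element of
`f(s⁻¹(v))` extends `e₁…e_{i−1}x`. -/
def RegCond {G H : DGraph} (f : G.FP → H.FP) (v : G.V) : Prop :=
  Set.InjOn (fun e => f (FP.ofEdge e)) {e : G.E | G.src e = v} ∧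
  ∀ p : H.FP, p ∈ EdgeImg f v ↔
    (0 < p.length ∧
     (∀ (q : H.FP) (h : p.tgt = q.src),
        FP.comp p q h ∈ EdgeImg f v → q = FP.ofVertex p.tgt) ∧
     (∀ (i : ℕ) (hi : i < p.length) (x : H.E),
        H.src x = H.src (p.edges.get ⟨i, hi⟩) →
        ∃ q ∈ EdgeImg f v, (p.edges.take i ++ [x]) <+: q.edges))

/-- A path homomorphism is regular if the regularity condition holds at every
regular vertex which is not 0-regular, and at every 0-regular vertex either the
regularity condition holds or `f(s⁻¹(v)) = {f(v)}`. -/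
def RegularHom {G H : DGraph} (f : G.FP → H.FP) : Prop :=
  ∀ v : G.V, RegularV G v →
    ((¬ Reg0V G v → RegCond f v) ∧
     (Reg0V G v → (RegCond f v ∨ EdgeImg f v = {f (FP.ofVertex v)})))

end DGraph

namespace DGraph

variable {G : DGraph}

lemma Path.edges_comp {a b c : G.V} (P : G.Path a b) (Q : G.Path b c) :
    (P.comp Q).edges = P.edges ++ Q.edges := by
  induction P with
  | nil => rfl
  | cons e p ih => simp [Path.comp, Path.edges, ih]

lemma Path.edges_cast {a a' b : G.V} (h : a = a') (P : G.Path a b) :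
    (cast (congrArg (fun x => G.Path x b) h) P).edges = P.edges := by
  subst h; rfl

lemma Path.eq_of_edges_eq {a b a' b' : G.V} (P : G.Path a b) (P' : G.Path a' b')
    (ha : a = a') (h : P.edges = P'.edges) : b = b' ∧ HEq P P' := by
  induction P generalizing a' b' with
  | nil =>
    cases P' with
    | nil => subst ha; exact ⟨rfl, HEq.rfl⟩
    | cons e p => simp [Path.edges] at h
  | cons e p ih =>
    cases P' with
    | nil => simp [Path.edges] at h
    | cons e' p' =>
      obtain ⟨rfl, hedges⟩ := List.cons_eq_cons.mp h
      obtain ⟨rfl, hp⟩ := ih p' rfl hedges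
      cases hp
      exact ⟨rfl, HEq.rfl⟩

lemma Path.exists_edges_eq_of_edges_eq_append {a a' b c : G.V} (P : G.Path a b)
    (Q : G.Path a' c) (ha : a = a') (l : List G.E) (h : Q.edges = P.edges ++ l) :
    ∃ R : G.Path b c, R.edges = l := by
  induction P generalizing a' Q with
  | nil => subst ha; exact ⟨Q, h⟩
  | cons e p ih =>
    cases Q with
    | nil => simp [Path.edges] at h
    | cons e' q =>
      obtain ⟨rfl, hq⟩ := List.cons_eq_cons.mp h
      exact ih q rfl hq

lemma Path.src_get_zero {a b : G.V} (P : G.Path a b) (h : 0 < P.edges.length) :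
    G.src (P.edges.get ⟨0, h⟩) = a := by
  cases P with
  | nil => simp [Path.edges] at h
  | cons => rfl

lemma Path.edges_eq_replicate_of_out_edges_eq_loop {w : G.V} {x : G.E}
    (hx : {y : G.E | G.src y = w} = {x}) (hloop : G.tgt x = w) {a b : G.V}
    (P : G.Path a b) (ha : a = w) : b = w ∧ P.edges = List.replicate P.edges.length x := by
  induction P with
  | nil => exact ⟨ha, rfl⟩
  | cons e p ih =>
    have he : e = x := by
      have : e ∈ {y : G.E | G.src y = w} := ha
      rwa [hx] at this
    subst he
    obtain ⟨hb, hp⟩ := ih hloop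
    exact ⟨hb, congrArg (e :: ·) hp⟩

lemma FP.ofVertex_injective : Function.Injective (FP.ofVertex : G.V → G.FP) :=
  fun _ _ h => congrArg FP.src h

lemma FP.edges_comp (p q : G.FP) (h : p.tgt = q.src) :
    (p.comp q h).edges = p.edges ++ q.edges :=
  (Path.edges_comp p.2.2 _).trans (congrArg (p.2.2.edges ++ ·) (Path.edges_cast h.symm q.2.2))

lemma FP.ext_of_edges {p q : G.FP} (hsrc : p.src = q.src) (hedges : p.edges = q.edges) :
    p = q := by
  obtain ⟨a, b, P⟩ := p
  obtain ⟨a', b', Q⟩ := q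
  obtain ⟨rfl, hPQ⟩ := Path.eq_of_edges_eq P Q hsrc hedges
  cases hsrc
  cases hPQ
  rfl

lemma FP.comp_ofVertex (p : G.FP) (h : p.tgt = (FP.ofVertex p.tgt : G.FP).src) :
    p.comp (FP.ofVertex p.tgt) h = p :=
  FP.ext_of_edges rfl ((FP.edges_comp _ _ h).trans (List.append_nil _))

lemma FP.le_of_prefix {p q : G.FP} (hsrc : p.src = q.src) (hpq : p.edges <+: q.edges) :
    p.le q := by
  obtain ⟨l, hl⟩ := hpq
  obtain ⟨R, hR⟩ := Path.exists_edges_eq_of_edges_eq_append p.2.2 q.2.2 hsrc l hl.symm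
  let r : G.FP := ⟨p.2.1, q.2.1, R⟩
  refine ⟨r, rfl, (FP.ext_of_edges (p := p.comp r rfl) hsrc ?_).symm⟩
  rw [FP.edges_comp p r rfl, ← hl, ← hR]
  rfl

lemma FP.src_get_zero (p : G.FP) (h : 0 < p.length) :
    G.src (p.edges.get ⟨0, h⟩) = p.src :=
  Path.src_get_zero p.2.2 h

/-- The paper's exhaustive prefix-free sets of positive-length paths: `RegCond f v` is
injectivity on `s⁻¹(v)` together with this condition on `EdgeImg f v`. -/
def ExhaustivePrefixFree (S : Set G.FP) : Prop :=
  ∀ p : G.FP, p ∈ S ↔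
    (0 < p.length ∧
     (∀ (q : G.FP) (h : p.tgt = q.src), FP.comp p q h ∈ S → q = FP.ofVertex p.tgt) ∧
     (∀ (i : ℕ) (hi : i < p.length) (x : G.E),
        G.src x = G.src (p.edges.get ⟨i, hi⟩) →
        ∃ q ∈ S, (p.edges.take i ++ [x]) <+: q.edges))

namespace ExhaustivePrefixFree

variable {S : Set G.FP} {w : G.V}

lemma eq_of_le (hS : ExhaustivePrefixFree S) {p q : G.FP} (hp : p ∈ S) (hq : q ∈ S)
    (hpq : p.le q) : p = q := by
  obtain ⟨r, h, rfl⟩ := hpq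
  obtain rfl := ((hS p).mp hp).2.1 r h hq
  exact (FP.comp_ofVertex p h).symm

lemma regularV (hS : ExhaustivePrefixFree S) (hfin : S.Finite) (hne : S.Nonempty)
    (hsrc : ∀ p ∈ S, p.src = w) : G.RegularV w := by
  obtain ⟨p, hp⟩ := hne
  have hlen : 0 < p.length := ((hS p).mp hp).1
  have hhead : G.src (p.edges.get ⟨0, hlen⟩) = w := (FP.src_get_zero p hlen).trans (hsrc p hp)
  have hout : {y : G.E | G.src y = w} ⊆ some ⁻¹' ((fun q : G.FP => q.edges.head?) '' S) := by
    intro y hy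
    obtain ⟨q, hq, hyq⟩ := ((hS p).mp hp).2.2 0 hlen y (hy.trans hhead.symm)
    exact ⟨q, hq, (List.singleton_prefix_iff_head?_eq_some.mp hyq)⟩
  exact ⟨((hfin.image _).preimage (Option.some_injective _).injOn).subset hout,
    _, hhead⟩

lemma subsingleton_of_reg0V (hS : ExhaustivePrefixFree S) (hw : G.Reg0V w)
    (hsrc : ∀ p ∈ S, p.src = w) : S.Subsingleton := by
  obtain ⟨x, hx, hloop⟩ := hw
  have hrep : ∀ p ∈ S, p.edges = List.replicate p.length x := fun p hp =>
    (Path.edges_eq_replicate_of_out_edges_eq_loop hx hloop p.2.2 (hsrc p hp)).2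
  have hle : ∀ p ∈ S, ∀ q ∈ S, p.length ≤ q.length → p = q := by
    intro p hp q hq hpq
    refine hS.eq_of_le hp hq (FP.le_of_prefix ((hsrc p hp).trans (hsrc q hq).symm) ?_)
    rw [hrep p hp, hrep q hq, ← Nat.add_sub_cancel' hpq, List.replicate_add]
    exact List.prefix_append _ _
  intro p hp q hq
  rcases le_total p.length q.length with hpq | hqp
  · exact hle p hp q hq hpq
  · exact (hle q hq p hp hqp).symm

end ExhaustivePrefixFree

end DGraph

open DGraph in
theorem regular_non_reg0_maps_to_regular_non_reg0_general (G H : DGraph) (f : G.FP → H.FP)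
    (hf : IsPathHom f) (hv : VertexInjective f)
    (hr : RegularHom f) (v : G.V) (hreg : RegularV G v) (h0 : ¬ Reg0V G v) :
    ∃ w : H.V, f (FP.ofVertex v) = FP.ofVertex w ∧ RegularV H w ∧ ¬ Reg0V H w := by
  obtain ⟨w, hw⟩ := hf.1 v
  obtain ⟨hinj, hS⟩ : _ ∧ ExhaustivePrefixFree (EdgeImg f v) := (hr v hreg).1 h0
  obtain ⟨hfin, e₀, he₀⟩ := hreg
  have hsrc : ∀ p ∈ EdgeImg f v, p.src = w := by
    rintro _ ⟨e, rfl, rfl⟩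
    exact FP.ofVertex_injective ((hf.2.1 (FP.ofEdge e)).symm.trans hw)
  refine ⟨w, hw, hS.regularV (hfin.image _) ⟨_, e₀, he₀, rfl⟩ hsrc, fun hw0 => h0 ?_⟩
  have hsingle : ∀ e, G.src e = v → e = e₀ := fun e he =>
    hinj he he₀ (hS.subsingleton_of_reg0V hw0 hsrc ⟨e, he, rfl⟩ ⟨e₀, he₀, rfl⟩)
  have himg_loop : (f (FP.ofEdge e₀)).tgt = w := by
    obtain ⟨x, hx, hloop⟩ := hw0
    exact (Path.edges_eq_replicate_of_out_edges_eq_loop hx hloop (f (FP.ofEdge e₀)).2.2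
      (hsrc _ ⟨e₀, he₀, rfl⟩)).1
  have hloop₀ : G.tgt e₀ = v :=
    hv ((hf.2.2.1 (FP.ofEdge e₀)).trans (himg_loop ▸ hw.symm))
  exact ⟨e₀, Set.ext fun e => ⟨hsingle e, fun he => he ▸ he₀⟩, hloop₀⟩

open DGraph in
/-- A vertex-injective, monotone, regular path homomorphism maps every regular
vertex that is not 0-regular to a regular vertex that is not 0-regular. -/
theorem regular_non_reg0_maps_to_regular_non_reg0 (G H : DGraph) (f : G.FP → H.FP)
    (hf : IsPathHom f) (hv : VertexInjective f) (hm : EdgeMonotone f)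
    (hr : RegularHom f) (v : G.V) (hreg : RegularV G v) (h0 : ¬ Reg0V G v) :
    ∃ w : H.V, f (FP.ofVertex v) = FP.ofVertex w ∧ RegularV H w ∧ ¬ Reg0V H w :=
  regular_non_reg0_maps_to_regular_non_reg0_general G H f hf hv hr v hreg h0
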